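/- Let G be a bipartite graph (boundary vertices black) with an interior 2-valent white vertex v whose two incident edges (v,u) and (v,u') have weight 1, with u ≠ u' both black. Let G' be the graph obtained by deleting v and its two edges and identifying u with u'. Then for every boundary subset I, the almost perfect matchings of G with boundary I are in weight-preserving bijection with those of G'; consequently Δ_I(G, wt) = Δ_I(G', wt') for all I, where wt' is the induced weighting. -/

import Mathlib

/-!
STATEMENT 16: contraction of an interior 2-valent white vertex.

Edges are modelled abstractly: a finite type `ε` with endpoint maps
`wend : ε → V` (white endpoint) and `bend : ε → V` (black endpoint) and
weights `wt : ε → ℂ`.  The vertex `v` is an interior 2-valent white vertex,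
whose two edges `e₁ = (v,u)` and `e₂ = (v,u')` have weight `1`, with
`u ≠ u'` black interior vertices.  The contracted graph `G'` is obtained by
deleting `v, e₁, e₂` and identifying `u'` with `u` (so `bend' e = u` whenever
`bend e = u'`).  Then for every boundary subset `I` the almost perfect
matchings of `G` with boundary `I` are in weight-preserving bijection with
those of `G'` (the bijection removes the matched edge at `v`), and consequently
`Δ_I(G, wt) = Δ_I(G', wt)` for all `I`.
-/

open scoped Classical

noncomputable section

variable {V ε : Type*} [Fintype V] [Fintype ε]

/-- Matchings of the original graph `G`. -/
def IsAPM (wend bend : ε → V) (B : Finset V) (π : Finset ε) : Prop :=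
  (∀ w, w ∉ B →
    (π.filter (fun e => wend e = w ∨ bend e = w)).card = 1) ∧
  (∀ w ∈ B, (π.filter (fun e => wend e = w ∨ bend e = w)).card ≤ 1)

/-- Boundary subset of a matching (boundary vertices are black, hence occur
only as `bend`). -/
def bdrySub (bend : ε → V) (B : Finset V) (π : Finset ε) : Finset V :=
  B.filter (fun w => ∃ e ∈ π, bend e = w)

/-- Matchings of the contracted graph `G'`: the edges `e₁, e₂` are deleted,
the vertices `v` and `u'` are gone, and `u'` is identified with `u` via the
modified endpoint map `bend'`. -/
def IsAPM' (wend bend' : ε → V) (B : Finset V) (v u' : V)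
    (e₁ e₂ : ε) (π : Finset ε) : Prop :=
  e₁ ∉ π ∧ e₂ ∉ π ∧
  (∀ w, w ∉ B → w ≠ v → w ≠ u' →
    (π.filter (fun e => wend e = w ∨ bend' e = w)).card = 1) ∧
  (∀ w ∈ B, (π.filter (fun e => wend e = w ∨ bend' e = w)).card ≤ 1)

def Delta (wend bend : ε → V) (B : Finset V) (wt : ε → ℂ)
    (I : Finset V) : ℂ :=
  ∑ π ∈ Finset.univ.powerset.filter
      (fun π => IsAPM wend bend B π ∧ bdrySub bend B π = I),
    ∏ e ∈ π, wt e

def Delta' (wend bend' : ε → V) (B : Finset V) (v u' : V) (e₁ e₂ : ε)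
    (wt : ε → ℂ) (I : Finset V) : ℂ :=
  ∑ π ∈ Finset.univ.powerset.filter
      (fun π => IsAPM' wend bend' B v u' e₁ e₂ π ∧ bdrySub bend' B π = I),
    ∏ e ∈ π, wt e

end

/-!
An almost perfect matching of `G` contains exactly one of the two edges at `v`; deleting it
leaves a matching of `G'` in which the merged vertex is covered exactly once, namely by the
edge that covered whichever of `u`, `u'` was not matched to `v`. Conversely, in a matching of
`G'` the partner of the merged vertex comes either from `u'`, and then `v` must be matched
to `u`, or from `u`, and then `v` must be matched to `u'`. Both edges at `v` have weight `1`,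
so the bijection preserves weights.
-/

open Finset

section Contraction

variable {V ε : Type*} {wend bend : ε → V} {B : Finset V} {π : Finset ε} {v u u' w : V}
  {e e₁ e₂ : ε}

noncomputable def degree (wend bend : ε → V) (π : Finset ε) (w : V) : ℕ :=
  #{e ∈ π | wend e = w ∨ bend e = w}

theorem isAPM_iff_degree :
    IsAPM wend bend B π ↔
      (∀ w ∉ B, degree wend bend π w = 1) ∧ ∀ w ∈ B, degree wend bend π w ≤ 1 :=
  Iff.rfl

theorem isAPM'_iff_degree :
    IsAPM' wend bend B v u' e₁ e₂ π ↔ e₁ ∉ π ∧ e₂ ∉ π ∧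
      (∀ w ∉ B, w ≠ v → w ≠ u' → degree wend bend π w = 1) ∧
      ∀ w ∈ B, degree wend bend π w ≤ 1 :=
  Iff.rfl

theorem degree_insert (he : e ∉ π) :
    degree wend bend (insert e π) w =
      degree wend bend π w + if wend e = w ∨ bend e = w then 1 else 0 := by
  unfold degree
  rw [filter_insert]
  split_ifs
  · exact card_insert_of_notMem (fun h => he (mem_filter.1 h).1)
  · rfl

theorem degree_of_forall_wend_ne (h : ∀ e, wend e ≠ w) :
    degree wend bend π w = #{e ∈ π | bend e = w} := by
  simp only [degree, h, false_or]

noncomputable def identify (u u' : V) (bend : ε → V) : ε → V :=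
  fun e => if bend e = u' then u else bend e

theorem identify_eq_iff_of_ne (hu : w ≠ u) (hu' : w ≠ u') :
    identify u u' bend e = w ↔ bend e = w := by
  unfold identify
  split_ifs with h
  · simp [h, hu.symm, hu'.symm]
  · rfl

theorem identify_eq_left_iff : identify u u' bend e = u ↔ bend e = u ∨ bend e = u' := by
  unfold identify
  split_ifs with h <;> simp [h]

theorem degree_identify_left (hw : ∀ e, wend e ≠ u) (hne : u ≠ u') :
    degree wend (identify u u' bend) π u =
      #{e ∈ π | bend e = u} + #{e ∈ π | bend e = u'} := by
  rw [degree_of_forall_wend_ne hw, ← card_union_of_disjoint, ← filter_or]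
  · simp only [identify_eq_left_iff]
  · exact disjoint_filter.2 fun e _ h h' => hne (h.symm.trans h')

theorem bdrySub_identify_sdiff (h₁ : bend e₁ = u) (h₂ : bend e₂ = u') (huB : u ∉ B)
    (hu'B : u' ∉ B) :
    bdrySub (identify u u' bend) B (π \ {e₁, e₂}) = bdrySub bend B π := by
  refine filter_congr fun w hw => ?_
  have hwu : w ≠ u := ne_of_mem_of_not_mem hw huB
  have hwu' : w ≠ u' := ne_of_mem_of_not_mem hw hu'B
  simp only [identify_eq_iff_of_ne hwu hwu', mem_sdiff, mem_insert, mem_singleton]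
  constructor
  · rintro ⟨e, ⟨he, -⟩, rfl⟩
    exact ⟨e, he, rfl⟩
  · rintro ⟨e, he, rfl⟩
    refine ⟨e, ⟨he, ?_⟩, rfl⟩
    rintro (rfl | rfl)
    exacts [hwu h₁, hwu' h₂]

theorem insert_sdiff_pair (he : e = e₁ ∨ e = e₂) (h₁ : e₁ ∉ π) (h₂ : e₂ ∉ π) :
    insert e π \ {e₁, e₂} = π := by
  rw [insert_sdiff_of_mem _ (by simpa using he), sdiff_eq_self_of_disjoint]
  simp [h₁, h₂]

/-- The vertex `v` is 2-valent with edges `e₁ = (v,u)`, `e₂ = (v,u')`; the last three fields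
say that `v` is white and `u`, `u'` are black. -/
structure IsTwoValentAt (wend bend : ε → V) (v u u' : V) (e₁ e₂ : ε) : Prop where
  wend_eq_iff : ∀ e, wend e = v ↔ e = e₁ ∨ e = e₂
  bend_fst : bend e₁ = u
  bend_snd : bend e₂ = u'
  ne : u ≠ u'
  bend_ne : ∀ e, bend e ≠ v
  wend_ne_fst : ∀ e, wend e ≠ u
  wend_ne_snd : ∀ e, wend e ≠ u'

/-- The edge at `v` missing from a matching `π` of `G'`: the partner edge of the merged vertex
covers `u'` or `u` in `G`, and `v` must be matched to the other one. -/
noncomputable def reinsertedEdge (bend : ε → V) (u' : V) (e₁ e₂ : ε)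
    (π : Finset ε) : ε :=
  if ∃ f ∈ π, bend f = u' then e₁ else e₂

theorem reinsertedEdge_eq_or :
    reinsertedEdge bend u' e₁ e₂ π = e₁ ∨ reinsertedEdge bend u' e₁ e₂ π = e₂ := by
  unfold reinsertedEdge
  split_ifs
  exacts [Or.inl rfl, Or.inr rfl]

namespace IsTwoValentAt

theorem fst_ne_snd (h : IsTwoValentAt wend bend v u u' e₁ e₂) : e₁ ≠ e₂ :=
  fun he => h.ne (h.bend_fst ▸ he ▸ h.bend_snd)

theorem v_ne_fst (h : IsTwoValentAt wend bend v u u' e₁ e₂) : v ≠ u :=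
  fun hv => h.bend_ne e₁ (h.bend_fst.trans hv.symm)

theorem degree_insert_of_ne (h : IsTwoValentAt wend bend v u u' e₁ e₂)
    (h₁ : e₁ ∉ π) (h₂ : e₂ ∉ π) (he : e = e₁ ∨ e = e₂)
    (hwv : w ≠ v) (hwu : w ≠ u) (hwu' : w ≠ u') :
    degree wend bend (insert e π) w = degree wend (identify u u' bend) π w := by
  have he_ends : wend e = v ∧ (bend e = u ∨ bend e = u') := by
    rcases he with rfl | rfl
    · exact ⟨(h.wend_eq_iff _).2 (Or.inl rfl), Or.inl h.bend_fst⟩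
    · exact ⟨(h.wend_eq_iff _).2 (Or.inr rfl), Or.inr h.bend_snd⟩
  rw [degree_insert (he.elim (· ▸ h₁) (· ▸ h₂)), if_neg, add_zero]
  · simp only [degree, identify_eq_iff_of_ne hwu hwu']
  · rintro (hw | hw)
    · exact hwv (hw.symm.trans he_ends.1)
    · exact he_ends.2.elim (fun hb => hwu (hw.symm.trans hb)) fun hb => hwu' (hw.symm.trans hb)

theorem degree_insert_v (h : IsTwoValentAt wend bend v u u' e₁ e₂)
    (h₁ : e₁ ∉ π) (h₂ : e₂ ∉ π) (he : e = e₁ ∨ e = e₂) :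
    degree wend bend (insert e π) v = 1 := by
  have hπ : degree wend bend π v = 0 := by
    refine card_eq_zero.2 (filter_eq_empty_iff.2 fun f hf hfv => ?_)
    rcases hfv.resolve_right (h.bend_ne f) |> (h.wend_eq_iff f).1 with rfl | rfl
    exacts [h₁ hf, h₂ hf]
  rw [degree_insert (he.elim (· ▸ h₁) (· ▸ h₂)), hπ,
    if_pos (Or.inl ((h.wend_eq_iff e).2 he))]

theorem degree_insert_eq_one_iff (h : IsTwoValentAt wend bend v u u' e₁ e₂)
    (h₁ : e₁ ∉ π) (h₂ : e₂ ∉ π) (he : e = e₁ ∨ e = e₂) :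
    (degree wend bend (insert e π) u = 1 ∧ degree wend bend (insert e π) u' = 1) ↔
      (degree wend (identify u u' bend) π u = 1 ∧ e = reinsertedEdge bend u' e₁ e₂ π) := by
  have hπe : e ∉ π := he.elim (· ▸ h₁) (· ▸ h₂)
  rw [degree_insert hπe, degree_insert hπe, degree_identify_left h.wend_ne_fst h.ne,
    degree_of_forall_wend_ne h.wend_ne_fst, degree_of_forall_wend_ne h.wend_ne_snd]
  simp only [reinsertedEdge, ← filter_nonempty_iff, ← card_pos]
  rcases he with rfl | rfl
  · simp only [h.wend_ne_fst, h.wend_ne_snd, h.bend_fst, h.ne, false_or, if_true, if_false]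
    split_ifs <;> simp only [h.fst_ne_snd, and_true, and_false, iff_false] <;> omega
  · simp only [h.wend_ne_fst, h.wend_ne_snd, h.bend_snd, h.ne.symm, false_or, if_true, if_false]
    split_ifs <;> simp only [h.fst_ne_snd.symm, and_true, and_false, iff_false] <;> omega

theorem exists_eq_insert_sdiff (h : IsTwoValentAt wend bend v u u' e₁ e₂) (hvB : v ∉ B)
    (hπ : IsAPM wend bend B π) :
    ∃ e, (e = e₁ ∨ e = e₂) ∧ π = insert e (π \ {e₁, e₂}) := by
  have hv : {f ∈ π | wend f = v ∨ bend f = v} = π ∩ {e₁, e₂} := by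
    ext f
    simp [h.wend_eq_iff, h.bend_ne]
  obtain ⟨e, he⟩ := card_eq_one.1 (hv ▸ hπ.1 v hvB)
  have he_mem : e ∈ π ∩ {e₁, e₂} := he ▸ mem_singleton_self e
  refine ⟨e, by simpa using (mem_inter.1 he_mem).2, ?_⟩
  rw [insert_eq, ← he, union_comm, sdiff_union_inter]

theorem isAPM_insert_iff (h : IsTwoValentAt wend bend v u u' e₁ e₂) (hvB : v ∉ B)
    (huB : u ∉ B) (hu'B : u' ∉ B) (h₁ : e₁ ∉ π) (h₂ : e₂ ∉ π) (he : e = e₁ ∨ e = e₂) :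
    IsAPM wend bend B (insert e π) ↔
      IsAPM' wend (identify u u' bend) B v u' e₁ e₂ π ∧
        e = reinsertedEdge bend u' e₁ e₂ π := by
  have hdeg {w} (hwv : w ≠ v) (hwu : w ≠ u) (hwu' : w ≠ u') :=
    h.degree_insert_of_ne h₁ h₂ he hwv hwu hwu'
  have hB {w} (hw : w ∈ B) : w ≠ v ∧ w ≠ u ∧ w ≠ u' :=
    ⟨ne_of_mem_of_not_mem hw hvB, ne_of_mem_of_not_mem hw huB, ne_of_mem_of_not_mem hw hu'B⟩
  rw [isAPM_iff_degree, isAPM'_iff_degree]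
  constructor
  · rintro ⟨hint, hbdry⟩
    obtain ⟨hu, he⟩ :=
      (h.degree_insert_eq_one_iff h₁ h₂ he).1 ⟨hint u huB, hint u' hu'B⟩
    refine ⟨⟨h₁, h₂, fun w hw hwv hwu' => ?_, fun w hw => ?_⟩, he⟩
    · rcases eq_or_ne w u with rfl | hwu
      · exact hu
      · exact hdeg hwv hwu hwu' ▸ hint w hw
    · obtain ⟨hwv, hwu, hwu'⟩ := hB hw
      exact hdeg hwv hwu hwu' ▸ hbdry w hw
  · rintro ⟨⟨-, -, hint, hbdry⟩, he'⟩
    obtain ⟨hu, hu'⟩ :=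
      (h.degree_insert_eq_one_iff h₁ h₂ he).2 ⟨hint u huB h.v_ne_fst.symm h.ne, he'⟩
    refine ⟨fun w hw => ?_, fun w hw => ?_⟩
    · rcases eq_or_ne w v with rfl | hwv
      · exact h.degree_insert_v h₁ h₂ he
      rcases eq_or_ne w u with rfl | hwu
      · exact hu
      rcases eq_or_ne w u' with rfl | hwu'
      · exact hu'
      exact (hdeg hwv hwu hwu').symm ▸ hint w hw hwv hwu'
    · obtain ⟨hwv, hwu, hwu'⟩ := hB hw
      exact (hdeg hwv hwu hwu').symm ▸ hbdry w hw

theorem isAPM'_sdiff (h : IsTwoValentAt wend bend v u u' e₁ e₂) (hvB : v ∉ B) (huB : u ∉ B)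
    (hu'B : u' ∉ B) (hπ : IsAPM wend bend B π) :
    IsAPM' wend (identify u u' bend) B v u' e₁ e₂ (π \ {e₁, e₂}) := by
  obtain ⟨e, he, hπe⟩ := h.exists_eq_insert_sdiff hvB hπ
  rw [hπe] at hπ
  exact ((h.isAPM_insert_iff hvB huB hu'B (by simp) (by simp) he).1 hπ).1

theorem insert_reinsertedEdge_sdiff (h : IsTwoValentAt wend bend v u u' e₁ e₂) (hvB : v ∉ B)
    (huB : u ∉ B) (hu'B : u' ∉ B) (hπ : IsAPM wend bend B π) :
    insert (reinsertedEdge bend u' e₁ e₂ (π \ {e₁, e₂})) (π \ {e₁, e₂}) = π := by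
  obtain ⟨e, he, hπe⟩ := h.exists_eq_insert_sdiff hvB hπ
  rw [hπe] at hπ
  rw [← ((h.isAPM_insert_iff hvB huB hu'B (by simp) (by simp) he).1 hπ).2, ← hπe]

theorem isAPM_insert_reinsertedEdge (h : IsTwoValentAt wend bend v u u' e₁ e₂) (hvB : v ∉ B)
    (huB : u ∉ B) (hu'B : u' ∉ B) (hπ : IsAPM' wend (identify u u' bend) B v u' e₁ e₂ π) :
    IsAPM wend bend B (insert (reinsertedEdge bend u' e₁ e₂ π) π) :=
  (h.isAPM_insert_iff hvB huB hu'B hπ.1 hπ.2.1 reinsertedEdge_eq_or).2 ⟨hπ, rfl⟩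

noncomputable def contractEquiv (h : IsTwoValentAt wend bend v u u' e₁ e₂) (hvB : v ∉ B)
    (huB : u ∉ B) (hu'B : u' ∉ B) (I : Finset V) :
    {π // IsAPM wend bend B π ∧ bdrySub bend B π = I} ≃
      {π // IsAPM' wend (identify u u' bend) B v u' e₁ e₂ π ∧
        bdrySub (identify u u' bend) B π = I} where
  toFun p := ⟨p.1 \ {e₁, e₂}, h.isAPM'_sdiff hvB huB hu'B p.2.1,
    (bdrySub_identify_sdiff h.bend_fst h.bend_snd huB hu'B).trans p.2.2⟩
  invFun q := ⟨insert (reinsertedEdge bend u' e₁ e₂ q.1) q.1,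
    h.isAPM_insert_reinsertedEdge hvB huB hu'B q.2.1, by
      rw [← bdrySub_identify_sdiff h.bend_fst h.bend_snd huB hu'B,
        insert_sdiff_pair reinsertedEdge_eq_or q.2.1.1 q.2.1.2.1, q.2.2]⟩
  left_inv p := Subtype.ext (h.insert_reinsertedEdge_sdiff hvB huB hu'B p.2.1)
  right_inv q := Subtype.ext (insert_sdiff_pair reinsertedEdge_eq_or q.2.1.1 q.2.1.2.1)

end IsTwoValentAt

theorem Delta_eq_sum [Fintype ε] (wt : ε → ℂ) (I : Finset V) :
    Delta wend bend B wt I =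
      ∑ p : {π // IsAPM wend bend B π ∧ bdrySub bend B π = I}, ∏ e ∈ p.1, wt e :=
  sum_subtype _ (by simp) _

theorem Delta'_eq_sum [Fintype ε] (wt : ε → ℂ) (I : Finset V) :
    Delta' wend bend B v u' e₁ e₂ wt I =
      ∑ p : {π // IsAPM' wend bend B v u' e₁ e₂ π ∧ bdrySub bend B π = I},
        ∏ e ∈ p.1, wt e :=
  sum_subtype _ (by simp) _

end Contraction

section

variable {V ε : Type*} [Fintype V] [Fintype ε]

theorem two_valent_contraction_general
    (white : V → Prop) (B : Finset V)                    -- boundary vertices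
    (wend bend : ε → V) (wt : ε → ℂ)
    (hwhite : ∀ e, white (wend e) ∧ ¬ white (bend e))
    (v u u' : V) (e₁ e₂ : ε)
    (hv : white v) (hvB : v ∉ B)                         -- `v` interior white
    (he₁ : wend e₁ = v ∧ bend e₁ = u)
    (he₂ : wend e₂ = v ∧ bend e₂ = u')
    (huu' : u ≠ u')
    (hu : ¬ white u) (hu' : ¬ white u')
    (huB : u ∉ B) (hu'B : u' ∉ B)                        -- `u, u'` interior
    (h2val : ∀ e, wend e = v → e = e₁ ∨ e = e₂)          -- `v` is 2-valent
    (hwt : wt e₁ = 1 ∧ wt e₂ = 1) :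
    ∀ I : Finset V,
      (∃ Φ : {π : Finset ε // IsAPM wend bend B π ∧ bdrySub bend B π = I} ≃
             {π : Finset ε //
               IsAPM' wend (fun e => if bend e = u' then u else bend e) B v u'
                 e₁ e₂ π ∧
               bdrySub (fun e => if bend e = u' then u else bend e) B π = I},
        ∀ p, ((Φ p : Finset ε)) = (p : Finset ε) \ {e₁, e₂} ∧
          (∏ e ∈ (Φ p : Finset ε), wt e) = ∏ e ∈ (p : Finset ε), wt e) ∧
      Delta wend bend B wt I
        = Delta' wend (fun e => if bend e = u' then u else bend e) B v u'
            e₁ e₂ wt I := by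
  intro I
  have h : IsTwoValentAt wend bend v u u' e₁ e₂ :=
    { wend_eq_iff := fun e => ⟨h2val e, by rintro (rfl | rfl); exacts [he₁.1, he₂.1]⟩
      bend_fst := he₁.2
      bend_snd := he₂.2
      ne := huu'
      bend_ne := fun e hb => (hwhite e).2 (hb ▸ hv)
      wend_ne_fst := fun e hw => hu (hw ▸ (hwhite e).1)
      wend_ne_snd := fun e hw => hu' (hw ▸ (hwhite e).1) }
  have hprod (π : Finset ε) : ∏ e ∈ π \ {e₁, e₂}, wt e = ∏ e ∈ π, wt e := by
    refine prod_subset sdiff_subset fun e he he' => ?_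
    obtain rfl | rfl : e = e₁ ∨ e = e₂ := by simpa [he, or_iff_not_imp_left] using he'
    exacts [hwt.1, hwt.2]
  let Φ := h.contractEquiv hvB huB hu'B I
  refine ⟨⟨Φ, fun p => ⟨rfl, hprod p.1⟩⟩, ?_⟩
  rw [Delta_eq_sum, Delta'_eq_sum]
  exact Fintype.sum_equiv Φ _ _ fun p => (hprod p.1).symm

theorem two_valent_contraction
    (white : V → Prop) (B : Finset V)                    -- boundary vertices
    (hBblack : ∀ w ∈ B, ¬ white w)
    (wend bend : ε → V) (wt : ε → ℂ)
    (hwhite : ∀ e, white (wend e) ∧ ¬ white (bend e))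
    (v u u' : V) (e₁ e₂ : ε)
    (hv : white v) (hvB : v ∉ B)                         -- `v` interior white
    (he₁ : wend e₁ = v ∧ bend e₁ = u)
    (he₂ : wend e₂ = v ∧ bend e₂ = u')
    (hne : e₁ ≠ e₂) (huu' : u ≠ u')
    (hu : ¬ white u) (hu' : ¬ white u')
    (huB : u ∉ B) (hu'B : u' ∉ B)                        -- `u, u'` interior
    (h2val : ∀ e, wend e = v → e = e₁ ∨ e = e₂)          -- `v` is 2-valent
    (hwt : wt e₁ = 1 ∧ wt e₂ = 1) :
    ∀ I : Finset V,
      (∃ Φ : {π : Finset ε // IsAPM wend bend B π ∧ bdrySub bend B π = I} ≃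
             {π : Finset ε //
               IsAPM' wend (fun e => if bend e = u' then u else bend e) B v u'
                 e₁ e₂ π ∧
               bdrySub (fun e => if bend e = u' then u else bend e) B π = I},
        ∀ p, ((Φ p : Finset ε)) = (p : Finset ε) \ {e₁, e₂} ∧
          (∏ e ∈ (Φ p : Finset ε), wt e) = ∏ e ∈ (p : Finset ε), wt e) ∧
      Delta wend bend B wt I
        = Delta' wend (fun e => if bend e = u' then u else bend e) B v u'
            e₁ e₂ wt I :=
  two_valent_contraction_general white B wend bend wt hwhite v u u' e₁ e₂ hv hvB he₁ he₂ huu' hu hu'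
    huB hu'B h2val hwt

end
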